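/- arXiv:1805.08181 — 2 statements merged into one kernel-verified Lean document; each statement's English description precedes it below -/
import Mathlib

section
/- Let M be a matroid on ground set {1,…,n} with rank function rk. Then there exists a unique partition {S₁,…,S_k} of {1,…,n} such that the affine span of the rank polytope P_M equals the affine subspace {x ∈ ℝⁿ : ∑_{i∈Sⱼ} xᵢ = rk(Sⱼ) for all j = 1,…,k}. In particular, every point x ∈ P_M satisfies ∑_{i∈Sⱼ} xᵢ ∈ ℤ for every j. -/
/-!
Call `e` and `f` exchangeable if some basis `B` contains `e`, misses `f`, and `B - e + f` is
again a basis, and partition the ground set into the classes of the equivalence relation this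
generates. An exchange never moves an element across a class, so for every class `T` the number
`|B ∩ T|` is the same for all bases `B`; extending a basis of `T` to a basis of `M` shows that it
is `rk T`. Hence all vertices `e_B` satisfy `∑_{i ∈ T} xᵢ = rk T`. Conversely the differences
`e_B - e_{B-e+f} = e_e - e_f` generate every `e_i - e_j` with `i`, `j` in one class, so they span
all vectors with vanishing class sums, and the affine span is the whole subspace.
A partition is recovered from its subspace `S`: `i` and `j` share a part iff translating a point
of `S` by `e_i - e_j` stays in `S`. Integrality holds because `rk T ∈ ℕ`.
-/

noncomputable section

/-- The indicator vector `e_B = ∑_{i ∈ B} eᵢ` of a set `B ⊆ {1,…,n}`. -/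
def indVec {n : ℕ} (B : Set (Fin n)) : Fin n → ℝ :=
  B.indicator fun _ => (1 : ℝ)

/-- The rank polytope of a matroid: the convex hull of the indicator vectors of its
bases. -/
def rankPolytope {n : ℕ} (M : Matroid (Fin n)) : Set (Fin n → ℝ) :=
  convexHull ℝ {x | ∃ B : Set (Fin n), M.IsBase B ∧ x = indVec B}

open Finset

namespace Finpartition

variable {ι : Type*} [DecidableEq ι]

lemma ext_part {s : Finset ι} {P Q : Finpartition s} (h : ∀ a ∈ s, P.part a = Q.part a) :
    P = Q := by
  suffices key : ∀ {P Q : Finpartition s}, (∀ a ∈ s, P.part a = Q.part a) →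
      P.parts ⊆ Q.parts from
    Finpartition.ext (subset_antisymm (key h) (key fun a ha => (h a ha).symm))
  intro P Q h T hT
  obtain ⟨a, ha⟩ := P.nonempty_of_mem_parts hT
  have has : a ∈ s := P.le hT ha
  rw [← P.part_eq_of_mem hT ha, h a has]
  exact Q.part_mem.2 has

variable [Fintype ι] {R : Type*}

lemma mem_span_single_sub_single [CommRing R] (P : Finpartition (univ : Finset ι)) {v : ι → R}
    (hv : ∀ T ∈ P.parts, ∑ i ∈ T, v i = 0) :
    v ∈ Submodule.span R {w | ∃ i, ∃ j ∈ P.part i, w = Pi.single i 1 - Pi.single j 1} := by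
  have hdecomp : v = ∑ T ∈ P.parts, ∑ i ∈ T, Pi.single i (v i) := calc
    v = ∑ i ∈ P.parts.biUnion id, Pi.single i (v i) := by rw [P.biUnion_parts, univ_sum_single]
    _ = _ := sum_biUnion P.supIndep.pairwiseDisjoint
  rw [hdecomp]
  refine Submodule.sum_mem _ fun T hT => ?_
  obtain ⟨a, ha⟩ := P.nonempty_of_mem_parts hT
  have hsplit : ∑ i ∈ T, Pi.single i (v i) =
      ∑ i ∈ T, v i • (Pi.single i 1 - Pi.single a 1 : ι → R) + (∑ i ∈ T, v i) • Pi.single a 1 := by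
    simp [smul_sub, sum_smul, ← Pi.single_smul']
  rw [hsplit, hv T hT, zero_smul, add_zero]
  refine Submodule.sum_mem _ fun i hi => Submodule.smul_mem _ _ (Submodule.subset_span ?_)
  exact ⟨i, a, by rwa [P.part_eq_of_mem hT hi], rfl⟩

lemma forall_sum_add_single_sub_single_eq_iff [Ring R] [Nontrivial R]
    (P : Finpartition (univ : Finset ι)) {c : Finset ι → R} {x : ι → R}
    (hx : ∀ T ∈ P.parts, ∑ k ∈ T, x k = c T) (i j : ι) :
    (∀ T ∈ P.parts, ∑ k ∈ T, (x + (Pi.single i 1 - Pi.single j 1) : ι → R) k = c T) ↔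
      j ∈ P.part i := by
  have hsum : ∀ T ∈ P.parts,
      (∑ k ∈ T, (x + (Pi.single i 1 - Pi.single j 1) : ι → R) k = c T ↔ (i ∈ T ↔ j ∈ T)) := by
    intro T hT
    simp only [Pi.add_apply, Pi.sub_apply, sum_add_distrib, sum_sub_distrib, sum_pi_single',
      hx T hT, add_eq_left, sub_eq_zero]
    split_ifs <;> simp_all
  have hi : P.part i ∈ P.parts := P.part_mem.2 (mem_univ i)
  refine ⟨fun h => ((hsum _ hi).1 (h _ hi)).1 (P.mem_part_self.2 (mem_univ i)),
    fun hj T hT => (hsum T hT).2 ?_⟩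
  rw [← P.part_eq_iff_mem hT, ← P.part_eq_iff_mem hT, P.part_eq_of_mem hi hj]

lemma eq_of_setOf_sum_eq [Ring R] [Nontrivial R] {P Q : Finpartition (univ : Finset ι)}
    {c d : Finset ι → R}
    (h : {x : ι → R | ∀ T ∈ P.parts, ∑ k ∈ T, x k = c T} =
      {x : ι → R | ∀ T ∈ Q.parts, ∑ k ∈ T, x k = d T})
    (hne : {x : ι → R | ∀ T ∈ P.parts, ∑ k ∈ T, x k = c T}.Nonempty) : P = Q := by
  obtain ⟨x, hxP⟩ := hne
  have hxQ : ∀ T ∈ Q.parts, ∑ k ∈ T, x k = d T := (Set.ext_iff.1 h x).1 hxP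
  refine ext_part fun i _ => Finset.ext fun j => ?_
  rw [← P.forall_sum_add_single_sub_single_eq_iff hxP,
    ← Q.forall_sum_add_single_sub_single_eq_iff hxQ]
  exact Set.ext_iff.1 h _

end Finpartition

namespace Matroid

variable {α : Type*} {M : Matroid α} {B B' I T : Set α}

def Exchangeable (M : Matroid α) (e f : α) : Prop :=
  ∃ B, M.IsBase B ∧ e ∈ B ∧ f ∉ B ∧ M.IsBase (insert f (B \ {e}))

def exchangeSetoid (M : Matroid α) : Setoid α :=
  Relation.EqvGen.setoid M.Exchangeable

lemma IsBase.ncard_inter_eq [M.RankFinite] (hB : M.IsBase B) (hB' : M.IsBase B')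
    (hT : ∀ e f, M.Exchangeable e f → (e ∈ T ↔ f ∈ T)) : (B ∩ T).ncard = (B' ∩ T).ncard := by
  induction hk : (B \ B').ncard generalizing B with
  | zero =>
    rw [Set.ncard_eq_zero hB.finite.sdiff, Set.sdiff_eq_empty] at hk
    rw [hB.eq_of_subset_isBase hB' hk]
  | succ k ih =>
    obtain ⟨e, heB, heB'⟩ := Set.nonempty_of_ncard_ne_zero (s := B \ B') (by omega)
    obtain ⟨f, ⟨hfB', hfB⟩, hB₂⟩ := hB.exchange hB' ⟨heB, heB'⟩
    have hef : e ∈ T ↔ f ∈ T := hT e f ⟨B, hB, heB, hfB, hB₂⟩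
    have hdiff : insert f (B \ {e}) \ B' = (B \ B') \ {e} := by
      ext x; simp only [Set.mem_sdiff, Set.mem_insert_iff, Set.mem_singleton_iff]
      constructor
      · rintro ⟨rfl | ⟨hxB, hxe⟩, hxB'⟩
        exacts [absurd hfB' hxB', ⟨⟨hxB, hxB'⟩, hxe⟩]
      · rintro ⟨⟨hxB, hxB'⟩, hxe⟩
        exact ⟨Or.inr ⟨hxB, hxe⟩, hxB'⟩
    have hstep : (insert f (B \ {e}) ∩ T).ncard = (B ∩ T).ncard := by
      by_cases heT : e ∈ T
      · rw [Set.insert_inter_of_mem (hef.1 heT), Set.sdiff_inter_right_comm]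
        exact Set.ncard_exchange (fun h => hfB h.1) ⟨heB, heT⟩
      · rw [Set.insert_inter_of_notMem (hef.not.1 heT), Set.sdiff_inter_right_comm,
          Set.sdiff_singleton_eq_self (fun h => heT h.2)]
    have hk₂ : (insert f (B \ {e}) \ B').ncard = k := by
      rw [hdiff, Set.ncard_sdiff_singleton_of_mem (show e ∈ B \ B' from ⟨heB, heB'⟩), hk]
      rfl
    rw [← hstep, ih hB₂ hk₂]

lemma IsBasis.ncard_eq_ncard_inter_isBase [M.RankFinite]
    (hT : ∀ e f, M.Exchangeable e f → (e ∈ T ↔ f ∈ T)) (hI : M.IsBasis I T) (hB : M.IsBase B) :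
    I.ncard = (B ∩ T).ncard := by
  obtain ⟨B', hB', rfl⟩ := hI.exists_isBase
  exact hB'.ncard_inter_eq hB hT

section Partition

variable [Fintype α] [DecidableEq α]

open Classical in
def exchangePartition (M : Matroid α) : Finpartition (univ : Finset α) :=
  Finpartition.ofSetoid M.exchangeSetoid

lemma mem_exchangePartition_part {a b : α} :
    b ∈ M.exchangePartition.part a ↔ M.exchangeSetoid a b := by
  unfold exchangePartition
  classical exact Finpartition.mem_part_ofSetoid_iff_rel

lemma mem_iff_mem_of_exchangeable {T : Finset α} (hT : T ∈ M.exchangePartition.parts) {e f : α}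
    (hef : M.Exchangeable e f) : e ∈ T ↔ f ∈ T := by
  obtain ⟨a, ha⟩ := M.exchangePartition.nonempty_of_mem_parts hT
  rw [← M.exchangePartition.part_eq_of_mem hT ha, mem_exchangePartition_part,
    mem_exchangePartition_part]
  have hef' : M.exchangeSetoid e f := Relation.EqvGen.rel e f hef
  exact ⟨fun h => M.exchangeSetoid.trans h hef',
    fun h => M.exchangeSetoid.trans h (M.exchangeSetoid.symm hef')⟩

end Partition

end Matroid

variable {n : ℕ} {M : Matroid (Fin n)}

def baseIndicators (M : Matroid (Fin n)) : Set (Fin n → ℝ) :=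
  {x | ∃ B : Set (Fin n), M.IsBase B ∧ x = indVec B}

lemma rankPolytope_eq_convexHull :
    rankPolytope M = convexHull ℝ (baseIndicators M) := rfl

lemma sum_indVec (B : Set (Fin n)) (T : Finset (Fin n)) :
    ∑ i ∈ T, indVec B i = (B ∩ T).ncard := by
  classical
  simp only [indVec, Set.indicator_apply]
  rw [sum_boole, ← Set.ncard_coe_finset, coe_filter]
  congr 2
  ext
  simp [and_comm]

lemma indVec_sub_indVec_exchange {B : Set (Fin n)} {i j : Fin n} (hi : i ∈ B) (hj : j ∉ B) :
    indVec B - indVec (insert j (B \ {i})) = Pi.single i 1 - Pi.single j 1 := by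
  classical
  ext k
  simp only [indVec, Pi.sub_apply, Set.indicator_apply, Set.mem_insert_iff, Set.mem_sdiff,
    Set.mem_singleton_iff, Pi.single_apply]
  split_ifs <;> simp_all

lemma single_sub_single_mem_vectorSpan {i j : Fin n}
    (h : M.exchangeSetoid i j) :
    (Pi.single i 1 - Pi.single j 1 : Fin n → ℝ) ∈ vectorSpan ℝ (baseIndicators M) := by
  let p := vectorSpan ℝ (baseIndicators M)
  -- congruence of the `e_k` modulo `p` is an equivalence relation containing exchangeability
  refine (Submodule.Quotient.eq p).1 <| Setoid.eqvGen_le (r := M.Exchangeable)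
    (s := Setoid.ker fun k => Submodule.Quotient.mk (p := p) (Pi.single k 1)) ?_ h
  rintro e f ⟨B, hB, he, hf, hB₂⟩
  refine (Submodule.Quotient.eq p).2 ?_
  rw [← indVec_sub_indVec_exchange he hf]
  exact vsub_mem_vectorSpan ℝ ⟨B, hB, rfl⟩ ⟨_, hB₂, rfl⟩

lemma vectorSpan_baseIndicators :
    (vectorSpan ℝ (baseIndicators M) : Set (Fin n → ℝ)) =
      {v | ∀ T ∈ M.exchangePartition.parts, ∑ i ∈ T, v i = 0} := by
  ext v
  constructor
  · intro hv
    refine Submodule.span_induction ?_ ?_ ?_ ?_ hv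
    · rintro _ ⟨_, ⟨B, hB, rfl⟩, _, ⟨B', hB', rfl⟩, rfl⟩ T hT
      change ∑ i ∈ T, (indVec B - indVec B') i = 0
      simp only [Pi.sub_apply, sum_sub_distrib, sum_indVec, sub_eq_zero]
      rw [hB.ncard_inter_eq hB' fun _ _ => Matroid.mem_iff_mem_of_exchangeable hT]
    · simp
    · intro x y _ _ hx hy T hT
      simp [sum_add_distrib, hx T hT, hy T hT]
    · intro a x _ hx T hT
      simp [← mul_sum, hx T hT]
  · intro hv
    refine Submodule.span_le.2 ?_ (M.exchangePartition.mem_span_single_sub_single hv)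
    rintro _ ⟨i, j, hj, rfl⟩
    exact single_sub_single_mem_vectorSpan (Matroid.mem_exchangePartition_part.1 hj)

lemma sum_indVec_eq_rk (hE : M.E = Set.univ) (rk : Set (Fin n) → ℕ)
    (hrk : ∀ S I : Set (Fin n), M.IsBasis I S → I.ncard = rk S) {B : Set (Fin n)}
    (hB : M.IsBase B) {T : Finset (Fin n)} (hT : T ∈ M.exchangePartition.parts) :
    ∑ i ∈ T, indVec B i = (rk T : ℝ) := by
  obtain ⟨I, hI⟩ := M.exists_isBasis (T : Set (Fin n)) (hE ▸ Set.subset_univ _)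
  rw [sum_indVec, ← hI.ncard_eq_ncard_inter_isBase
    (fun _ _ => Matroid.mem_iff_mem_of_exchangeable hT) hB, hrk _ _ hI]

lemma affineSpan_rankPolytope (hE : M.E = Set.univ) (rk : Set (Fin n) → ℕ)
    (hrk : ∀ S I : Set (Fin n), M.IsBasis I S → I.ncard = rk S) :
    (affineSpan ℝ (rankPolytope M) : Set (Fin n → ℝ)) =
      {x | ∀ T ∈ M.exchangePartition.parts, ∑ i ∈ T, x i = (rk T : ℝ)} := by
  obtain ⟨B₀, hB₀⟩ := M.exists_isBase
  have hB₀_mem : indVec B₀ ∈ affineSpan ℝ (baseIndicators M) :=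
    mem_affineSpan ℝ ⟨B₀, hB₀, rfl⟩
  ext x
  rw [rankPolytope_eq_convexHull, affineSpan_convexHull, SetLike.mem_coe,
    ← AffineSubspace.vsub_right_mem_direction_iff_mem hB₀_mem, direction_affineSpan,
    ← SetLike.mem_coe, vectorSpan_baseIndicators]
  simp only [Set.mem_ofPred_eq, vsub_eq_sub, Pi.sub_apply, sum_sub_distrib, sub_eq_zero]
  exact forall₂_congr fun T hT => by rw [sum_indVec_eq_rk hE rk hrk hB₀ hT]

/-- There is a unique partition `{S₁,…,S_k}` of `{1,…,n}` such that the affine span of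
`P_M` is `{x | ∑_{i∈Sⱼ} xᵢ = rk(Sⱼ) for all j}`; in particular every `x ∈ P_M` has
integral coordinate sums over each part. -/
theorem affineSpan_rankPolytope_unique_partition {n : ℕ} (M : Matroid (Fin n))
    (hE : M.E = Set.univ)
    (rk : Set (Fin n) → ℕ) (hrk : ∀ S I : Set (Fin n), M.IsBasis I S → I.ncard = rk S) :
    (∃! Q : Finpartition (Finset.univ : Finset (Fin n)),
      (affineSpan ℝ (rankPolytope M) : Set (Fin n → ℝ)) =
        {x | ∀ T ∈ Q.parts, ∑ i ∈ T, x i = (rk ↑T : ℝ)}) ∧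
    ∀ Q : Finpartition (Finset.univ : Finset (Fin n)),
      (affineSpan ℝ (rankPolytope M) : Set (Fin n → ℝ)) =
        {x | ∀ T ∈ Q.parts, ∑ i ∈ T, x i = (rk ↑T : ℝ)} →
      ∀ x ∈ rankPolytope M, ∀ T ∈ Q.parts, ∃ m : ℤ, ∑ i ∈ T, x i = (m : ℝ) := by
  have hspan := affineSpan_rankPolytope hE rk hrk
  obtain ⟨B₀, hB₀⟩ := M.exists_isBase
  have hB₀_mem : indVec B₀ ∈ (affineSpan ℝ (rankPolytope M) : Set (Fin n → ℝ)) :=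
    subset_affineSpan ℝ _ (subset_convexHull ℝ _ ⟨B₀, hB₀, rfl⟩)
  refine ⟨⟨M.exchangePartition, hspan, fun Q hQ =>
    Finpartition.eq_of_setOf_sum_eq (hQ.symm.trans hspan) ⟨_, hQ ▸ hB₀_mem⟩⟩, ?_⟩
  intro Q hQ x hx T hT
  have hx' : x ∈ (affineSpan ℝ (rankPolytope M) : Set (Fin n → ℝ)) := subset_affineSpan ℝ _ hx
  rw [hQ] at hx'
  exact ⟨rk T, by exact_mod_cast hx' T hT⟩
end
end

section
/- Let M be a matroid of rank d on ground set {1,…,n} and let i ≠ j be elements of {1,…,n}. Let 𝔅 be the collection consisting of all bases of M together with all sets (B∖{j})∪{i} for B a base of M with j ∈ B and i ∉ B. Then 𝔅 is the collection of bases of a matroid M′ on {1,…,n}, and the convex hull of {e_B : B ∈ 𝔅} equals (P_M + ℝ_{≥0}(eᵢ − eⱼ)) ∩ Δ_{d,n}. -/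
open Pointwise

noncomputable section

/-- The standard basis vector `eᵢ` of `ℝⁿ`. -/
def eVec (n : ℕ) (i : Fin n) : Fin n → ℝ := Pi.single i 1

/-- The ray `ℝ_{≥0} v`. -/
def ray {n : ℕ} (v : Fin n → ℝ) : Set (Fin n → ℝ) :=
  {x | ∃ t : ℝ, 0 ≤ t ∧ x = t • v}

/-- The hypersimplex `Δ_{d,n}`. -/
def hypersimplex (d n : ℕ) : Set (Fin n → ℝ) :=
  {x | (∀ i, 0 ≤ x i ∧ x i ≤ 1) ∧ ∑ i, x i = d}

/-- The family consisting of the bases of `M` together with the exchanged sets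
`(B ∖ {j}) ∪ {i}` for bases `B` with `j ∈ B`, `i ∉ B`. -/
def exchangeFamily {n : ℕ} (M : Matroid (Fin n)) (i j : Fin n) : Set (Set (Fin n)) :=
  {B | M.IsBase B} ∪ {B' | ∃ B : Set (Fin n), M.IsBase B ∧ j ∈ B ∧ i ∉ B ∧
    B' = (B \ {j}) ∪ {i}}

/-!
The independent sets of `M′` are the independent sets of `M` together with the sets `I` with
`i ∈ I`, `j ∉ I` and `I \ {i} ∪ {j}` independent in `M`; they satisfy the augmentation axiom,
and the maximal ones are exactly the sets of the exchange family.

Each vertex `e_B` of `conv 𝔅` lies in the convex set `(P_M + ℝ≥0(eᵢ - eⱼ)) ∩ Δ`. Conversely,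
for `x = p + t(eᵢ - eⱼ)` in that set we have `t ≤ pⱼ` and `t ≤ 1 - pᵢ`. Among all ways of
writing `p` as a convex combination of bases of `M` choose one (by compactness) maximising the
weight `α` carried by the bases `B` with `j ∈ B`, `i ∉ B`. Replacing each such `B` by
`B \ {j} ∪ {i}` shows `p + α(eᵢ - eⱼ) ∈ conv 𝔅`, so it suffices that `t ≤ α`. Otherwise some
base `B₁ ∋ i, j` and some base `B₂ ∌ i, j` have positive weight, and moving weight from them to
a symmetric exchange `B₁ - j + f`, `B₂ - f + j` keeps `p` but increases `α`.
-/

open Set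

namespace Matroid

variable {α : Type*} {M : Matroid α} {i j e : α} {I J K B B₁ B₂ : Set α}

theorem IsBase.exists_symm_exchange (hB₁ : M.IsBase B₁) (hB₂ : M.IsBase B₂) (he : e ∈ B₁ \ B₂) :
    ∃ f ∈ B₂ \ B₁, M.IsBase (insert f (B₁ \ {e})) ∧ M.IsBase (insert e (B₂ \ {f})) := by
  have heE : e ∈ M.E := hB₁.subset_ground he.1
  have hC := hB₂.fundCircuit_isCircuit heE he.2
  have hK := hB₁.compl_closure_sdiff_singleton_isCocircuit he.1
  have heK : e ∈ M.E \ M.closure (B₁ \ {e}) := ⟨heE, hB₁.indep.notMem_closure_sdiff_of_mem he.1⟩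
  obtain ⟨f, ⟨hfC, hfK⟩, hfe⟩ : ∃ f ∈ M.fundCircuit e B₂ ∩ (M.E \ M.closure (B₁ \ {e})), f ≠ e := by
    by_contra! h
    exact hC.inter_isCocircuit_ne_singleton hK
      (eq_singleton_iff_unique_mem.2 ⟨⟨M.mem_fundCircuit e B₂, heK⟩, h⟩)
  have hfB₂ : f ∈ B₂ := (M.fundCircuit_subset_insert e B₂ hfC).resolve_left hfe
  have hfB₁ : f ∉ B₁ := fun hfB₁ ↦
    hfK.2 (M.subset_closure _ (sdiff_subset.trans hB₁.subset_ground) ⟨hfB₁, hfe⟩)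
  have hind := (hB₂.indep.mem_fundCircuit_iff (by rw [hB₂.closure_eq]; exact heE) he.2).1 hfC
  rw [← insert_sdiff_singleton_comm hfe.symm] at hind
  exact ⟨f, ⟨hfB₂, hfB₁⟩, hB₁.exchange_base_of_notMem_closure he.1 hfK.2 hfK.1,
    hB₂.exchange_isBase_of_indep he.2 hind⟩

theorem isBase_iff_indep_encard_eq [M.RankFinite] : M.IsBase B ↔ M.Indep B ∧ B.encard = M.eRank :=
  ⟨fun hB ↦ ⟨hB.indep, hB.encard_eq_eRank⟩, fun ⟨hB, hcard⟩ ↦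
    hB.isBase_of_eRk_ge hB.finite (by rw [hB.eRk_eq_encard, hcard])⟩

def ExchangeIndep (M : Matroid α) (i j : α) (I : Set α) : Prop :=
  M.Indep I ∨ (i ∈ I ∧ j ∉ I ∧ M.Indep (insert j (I \ {i})))

theorem encard_insert_sdiff_singleton (hi : i ∈ I) (hj : j ∉ I) :
    (insert j (I \ {i})).encard = I.encard := by
  rw [encard_insert_of_notMem fun h ↦ hj h.1, encard_sdiff_singleton_add_one hi]

theorem ExchangeIndep.subset (hJ : M.ExchangeIndep i j J) (hIJ : I ⊆ J) :
    M.ExchangeIndep i j I := by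
  rcases hJ with hJ | ⟨hiJ, hjJ, hJ⟩
  · exact Or.inl (hJ.subset hIJ)
  by_cases hiI : i ∈ I
  · exact Or.inr ⟨hiI, fun hjI ↦ hjJ (hIJ hjI),
      hJ.subset (insert_subset_insert (sdiff_subset_sdiff_left hIJ))⟩
  · refine Or.inl (hJ.subset fun x hx ↦ Or.inr ⟨hIJ hx, ?_⟩)
    rintro rfl
    exact hiI hx

theorem ExchangeIndep.exists_indep (hJ : M.ExchangeIndep i j J) :
    ∃ K, M.Indep K ∧ K ⊆ insert j J ∧ K.encard = J.encard := by
  rcases hJ with hJ | ⟨hiJ, hjJ, hJ⟩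
  · exact ⟨J, hJ, subset_insert j J, rfl⟩
  · exact ⟨_, hJ, insert_subset_insert sdiff_subset, encard_insert_sdiff_singleton hiJ hjJ⟩

theorem ExchangeIndep.subset_ground (hI : M.ExchangeIndep i j I) (hi : i ∈ M.E) : I ⊆ M.E := by
  rcases hI with hI | ⟨-, -, hI⟩
  · exact hI.subset_ground
  · intro x hx
    obtain rfl | hxi := eq_or_ne x i
    exacts [hi, hI.subset_ground (mem_insert_of_mem j ⟨hx, hxi⟩)]

theorem ExchangeIndep.encard_le_eRank (hI : M.ExchangeIndep i j I) : I.encard ≤ M.eRank := by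
  obtain ⟨K, hK, -, hKI⟩ := hI.exists_indep
  exact hKI ▸ hK.encard_le_eRank

theorem exchangeIndep_insert (hiI : i ∈ I) (hjI : j ∉ I) (hei : e ≠ i) (hej : e ≠ j)
    (h : M.Indep (insert e (insert j (I \ {i})))) : M.ExchangeIndep i j (insert e I) := by
  refine Or.inr ⟨mem_insert_of_mem e hiI, by simp [hjI, hej.symm], ?_⟩
  rwa [← insert_sdiff_singleton_comm hei, insert_comm]

theorem exchangeIndep_augment_of_swap (hiI : i ∈ I) (hjI : j ∉ I)
    (hI : M.Indep (insert j (I \ {i}))) (hK : M.Indep K) (hKJ : K ⊆ insert j J)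
    (hlt : I.encard < K.encard) (hKi : i ∈ K → ¬ M.Indep I) :
    ∃ e ∈ J, e ∉ I ∧ M.ExchangeIndep i j (insert e I) := by
  obtain ⟨e, ⟨heK, heI'⟩, he⟩ := hI.augment hK (by rwa [encard_insert_sdiff_singleton hiI hjI])
  have hej : e ≠ j := by
    rintro rfl
    exact heI' (mem_insert e _)
  have hei : e ≠ i := by
    rintro rfl
    refine hKi heK (he.subset fun x hx ↦ ?_)
    by_cases hxe : x = e <;> simp [hx, hxe]
  exact ⟨e, (hKJ heK).resolve_left hej, fun heI ↦ heI' (mem_insert_of_mem j ⟨heI, hei⟩),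
    exchangeIndep_insert hiI hjI hei hej he⟩

theorem ExchangeIndep.augment (hij : i ≠ j) (hI : M.ExchangeIndep i j I)
    (hJ : M.ExchangeIndep i j J) (hlt : I.encard < J.encard) :
    ∃ e ∈ J, e ∉ I ∧ M.ExchangeIndep i j (insert e I) := by
  by_cases hMI : M.Indep I
  swap
  · obtain ⟨hiI, hjI, hI'⟩ := hI.resolve_left hMI
    obtain ⟨K, hK, hKJ, hKJ'⟩ := hJ.exists_indep
    exact exchangeIndep_augment_of_swap hiI hjI hI' hK hKJ (hKJ' ▸ hlt) fun _ ↦ hMI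
  rcases hJ with hMJ | ⟨hiJ, hjJ, hJ'⟩
  · obtain ⟨e, heJI, he⟩ := hMI.augment hMJ hlt
    exact ⟨e, heJI.1, heJI.2, Or.inl he⟩
  have hlt' : I.encard < (insert j (J \ {i})).encard := by
    rwa [encard_insert_sdiff_singleton hiJ hjJ]
  obtain ⟨e, ⟨heJ', heI⟩, he⟩ := hMI.augment hJ' hlt'
  obtain rfl | hej := eq_or_ne e j
  swap
  · exact ⟨e, (heJ'.resolve_left hej).1, heI, Or.inl he⟩
  by_cases hiI : i ∈ I
  · -- `insert j (I \ {i}) ⊆ insert j I` is independent in `M`: augment it instead of `I`.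
    refine exchangeIndep_augment_of_swap hiI heI (he.subset (insert_subset_insert sdiff_subset))
      hJ' (insert_subset_insert sdiff_subset) hlt' ?_
    rintro (h | h)
    exacts [(hij h).elim, (h.2 rfl).elim]
  · refine ⟨i, hiJ, hiI, Or.inr ⟨mem_insert i I, by simp [hij.symm, heI], ?_⟩⟩
    rwa [insert_sdiff_self_of_notMem hiI]

def exchangeMatroid (M : Matroid α) [M.RankFinite] (hij : i ≠ j) (hi : i ∈ M.E) : Matroid α :=
  (IndepMatroid.ofBddAugment M.E (M.ExchangeIndep i j) (Or.inl M.empty_indep)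
    (fun _ _ hJ hIJ ↦ hJ.subset hIJ) (fun _ _ hI hJ hlt ↦ hI.augment hij hJ hlt)
    ⟨M.eRank.toNat, fun _ hI ↦ by
      rw [ENat.natCast_toNat ((eRank_ne_top_iff M).2 ‹_›)]
      exact hI.encard_le_eRank⟩
    (fun _ hI ↦ hI.subset_ground hi)).matroid

theorem exists_isBase_swap_iff (hij : i ≠ j) :
    (∃ B₀, M.IsBase B₀ ∧ j ∈ B₀ ∧ i ∉ B₀ ∧ B = B₀ \ {j} ∪ {i}) ↔
      i ∈ B ∧ j ∉ B ∧ M.IsBase (insert j (B \ {i})) := by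
  constructor
  · rintro ⟨B₀, hB₀, hjB₀, hiB₀, rfl⟩
    refine ⟨by simp, by simp [hij.symm], ?_⟩
    convert hB₀ using 1
    ext x
    by_cases hxi : x = i <;> by_cases hxj : x = j <;> simp_all
  · rintro ⟨hiB, hjB, hB⟩
    refine ⟨_, hB, mem_insert j _, by simp [hij], ?_⟩
    ext x
    by_cases hxi : x = i <;> by_cases hxj : x = j <;> simp_all

variable [M.RankFinite] {hij : i ≠ j} {hi : i ∈ M.E}

theorem exchangeMatroid_indep_iff : (M.exchangeMatroid hij hi).Indep I ↔ M.ExchangeIndep i j I :=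
  Iff.rfl

instance : (M.exchangeMatroid hij hi).RankFinite := by
  unfold exchangeMatroid
  exact IndepMatroid.ofBddAugment_rankFinite ..

theorem exchangeMatroid_eRank : (M.exchangeMatroid hij hi).eRank = M.eRank := by
  obtain ⟨B, hB⟩ := M.exists_isBase
  obtain ⟨B', hB'⟩ := (M.exchangeMatroid hij hi).exists_isBase
  refine le_antisymm ?_ ?_
  · rw [← hB'.encard_eq_eRank]
    exact ExchangeIndep.encard_le_eRank hB'.indep
  · rw [← hB.encard_eq_eRank]
    exact Indep.encard_le_eRank (M := M.exchangeMatroid hij hi) (Or.inl hB.indep)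

theorem exchangeMatroid_isBase_iff :
    (M.exchangeMatroid hij hi).IsBase B ↔
      M.IsBase B ∨ ∃ B₀, M.IsBase B₀ ∧ j ∈ B₀ ∧ i ∉ B₀ ∧ B = B₀ \ {j} ∪ {i} := by
  rw [isBase_iff_indep_encard_eq, exchangeMatroid_eRank, exchangeMatroid_indep_iff,
    exists_isBase_swap_iff hij, ExchangeIndep, isBase_iff_indep_encard_eq]
  constructor
  · rintro ⟨hB | ⟨hiB, hjB, hB⟩, hcard⟩
    · exact Or.inl ⟨hB, hcard⟩
    · exact Or.inr ⟨hiB, hjB, isBase_iff_indep_encard_eq.2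
        ⟨hB, by rw [encard_insert_sdiff_singleton hiB hjB, hcard]⟩⟩
  · rintro (hB | ⟨hiB, hjB, hB⟩)
    · exact ⟨Or.inl hB.1, hB.2⟩
    · exact ⟨Or.inr ⟨hiB, hjB, hB.indep⟩, by
        rw [← encard_insert_sdiff_singleton hiB hjB, hB.encard_eq_eRank]⟩

end Matroid

section ConvexCombination

variable {ι E : Type*} [Fintype ι] [AddCommGroup E] [Module ℝ E]

theorem convexHull_range_eq_image_stdSimplex (v : ι → E) :
    convexHull ℝ (range v) = (fun w ↦ ∑ k, w k • v k) '' stdSimplex ℝ ι := by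
  classical
  have hL : (fun w : ι → ℝ ↦ ∑ k, w k • v k) = Fintype.linearCombination ℝ v :=
    funext fun w ↦ (Fintype.linearCombination_apply ℝ v w).symm
  rw [← convexHull_rangle_single_eq_stdSimplex, hL, LinearMap.image_convexHull, ← range_comp]
  congr 2
  ext k
  simp

theorem Convex.add_smul_mem_of_le {s : Set E} (hs : Convex ℝ s) {x y : E} {a t : ℝ}
    (hx : x ∈ s) (hy : x + a • y ∈ s) (ht₀ : 0 ≤ t) (hta : t ≤ a) : x + t • y ∈ s := by
  obtain rfl | ha := (ht₀.trans hta).eq_or_lt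
  · rwa [le_antisymm hta ht₀]
  convert hs.add_smul_mem hx hy ⟨div_nonneg ht₀ ha.le, div_le_one_of_le₀ hta ha.le⟩ using 2
  rw [smul_smul, div_mul_cancel₀ t ha.ne']

theorem exists_pos_lt_of_sum_mul_lt {w f g : ι → ℝ} (hw : ∀ k, 0 ≤ w k)
    (h : ∑ k, w k * f k < ∑ k, w k * g k) : ∃ k, 0 < w k ∧ f k < g k := by
  obtain ⟨k, -, hk⟩ := Finset.exists_lt_of_sum_lt h
  have hwk : 0 < w k := (hw k).lt_of_ne fun h0 ↦ by simp [← h0] at hk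
  exact ⟨k, hwk, lt_of_mul_lt_mul_left hk hwk.le⟩

variable [DecidableEq ι]

def transferWeight (b₁ b₂ c₁ c₂ : ι) : ι → ℝ :=
  Pi.single c₁ 1 + Pi.single c₂ 1 - Pi.single b₁ 1 - Pi.single b₂ 1

theorem sum_add_smul_transferWeight_smul (w : ι → ℝ) (m : ℝ) (b₁ b₂ c₁ c₂ : ι) (v : ι → E) :
    ∑ k, (w + m • transferWeight b₁ b₂ c₁ c₂) k • v k =
      ∑ k, w k • v k + m • (v c₁ + v c₂ - v b₁ - v b₂) := by
  simp only [← Fintype.linearCombination_apply ℝ, transferWeight, map_add, map_smul, map_sub,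
    Fintype.linearCombination_apply_single, one_smul]

theorem add_smul_transferWeight_mem_stdSimplex {w : ι → ℝ} (hw : w ∈ stdSimplex ℝ ι)
    {b₁ b₂ : ι} (hb : b₁ ≠ b₂) (c₁ c₂ : ι) {m : ℝ} (hm : 0 ≤ m) (h₁ : m ≤ w b₁)
    (h₂ : m ≤ w b₂) : w + m • transferWeight b₁ b₂ c₁ c₂ ∈ stdSimplex ℝ ι := by
  refine ⟨fun k ↦ ?_, ?_⟩
  · have hk := hw.1 k
    simp only [transferWeight, Pi.add_apply, Pi.smul_apply, Pi.sub_apply, Pi.single_apply,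
      smul_eq_mul]
    split_ifs <;> subst_vars <;> first | exact absurd rfl hb | nlinarith
  · have := sum_add_smul_transferWeight_smul w m b₁ b₂ c₁ c₂ (fun _ ↦ (1 : ℝ))
    simp only [smul_eq_mul, mul_one] at this
    rw [this, hw.2]
    ring

end ConvexCombination

theorem exists_max_sum_mul_of_mem_convexHull {ι E : Type*} [Fintype ι] [NormedAddCommGroup E]
    [NormedSpace ℝ E] {v : ι → E} {p : E} (hp : p ∈ convexHull ℝ (range v)) (φ : ι → ℝ) :
    ∃ w ∈ stdSimplex ℝ ι, ∑ k, w k • v k = p ∧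
      ∀ w' ∈ stdSimplex ℝ ι, ∑ k, w' k • v k = p → ∑ k, w' k * φ k ≤ ∑ k, w k * φ k := by
  have hK : IsCompact (stdSimplex ℝ ι ∩ {w | ∑ k, w k • v k = p}) :=
    (isCompact_stdSimplex ℝ ι).inter_right (isClosed_eq (by fun_prop) continuous_const)
  rw [convexHull_range_eq_image_stdSimplex] at hp
  obtain ⟨w, ⟨hw, hwp⟩, hmax⟩ :=
    hK.exists_isMaxOn hp (Continuous.continuousOn (f := fun w : ι → ℝ ↦ ∑ k, w k * φ k)
      (by fun_prop))
  exact ⟨w, hw, hwp, fun w' hw' hw'p ↦ hmax ⟨hw', hw'p⟩⟩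

section RankPolytope

variable {n d : ℕ} {M : Matroid (Fin n)} {i j k : Fin n} {B : Set (Fin n)}

@[simp] theorem indVec_apply_of_mem (h : k ∈ B) : indVec B k = 1 := indicator_of_mem h _

@[simp] theorem indVec_apply_of_notMem (h : k ∉ B) : indVec B k = 0 := indicator_of_notMem h _

theorem indVec_sdiff_union_singleton (hij : i ≠ j) (hjB : j ∈ B) (hiB : i ∉ B) :
    indVec (B \ {j} ∪ {i}) = indVec B + (eVec n i - eVec n j) := by
  funext k
  by_cases hki : k = i
  · subst hki
    simp [eVec, hiB, hij]
  by_cases hkj : k = j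
  · subst hkj
    simp [eVec, hjB, hki]
  by_cases hkB : k ∈ B <;> simp [eVec, hkB, hki, hkj]

theorem indVec_insert_sdiff_add_indVec_insert_sdiff {B₁ B₂ : Set (Fin n)} {a f : Fin n}
    (ha₁ : a ∈ B₁) (ha₂ : a ∉ B₂) (hf₂ : f ∈ B₂) (hf₁ : f ∉ B₁) :
    indVec (insert f (B₁ \ {a})) + indVec (insert a (B₂ \ {f})) = indVec B₁ + indVec B₂ := by
  have haf : a ≠ f := fun h ↦ ha₂ (h ▸ hf₂)
  funext k
  by_cases hka : k = a
  · subst hka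
    simp [ha₁, ha₂, haf]
  by_cases hkf : k = f
  · subst hkf
    simp [hf₁, hf₂, haf.symm]
  by_cases h₁ : k ∈ B₁ <;> by_cases h₂ : k ∈ B₂ <;> simp [hka, hkf, h₁, h₂]

theorem sum_indVec_s19 (B : Set (Fin n)) : ∑ k, indVec B k = B.ncard := by
  classical
  simp [indVec, indicator_apply, Finset.sum_boole, ncard_eq_toFinset_card']

theorem indVec_mem_hypersimplex (hB : B.ncard = d) : indVec B ∈ hypersimplex d n := by
  refine ⟨fun k ↦ ?_, by rw [sum_indVec_s19, hB]⟩
  by_cases hk : k ∈ B <;> simp [hk]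

theorem convex_ray (v : Fin n → ℝ) : Convex ℝ (ray v) := by
  rintro _ ⟨t₁, ht₁, rfl⟩ _ ⟨t₂, ht₂, rfl⟩ a b ha hb -
  exact ⟨a * t₁ + b * t₂, by positivity, by rw [add_smul, smul_smul, smul_smul]⟩

theorem convex_hypersimplex : Convex ℝ (hypersimplex d n) := by
  rintro x ⟨hx, hxd⟩ y ⟨hy, hyd⟩ a b ha hb hab
  refine ⟨fun k ↦ ⟨?_, ?_⟩, ?_⟩
  · exact add_nonneg (mul_nonneg ha (hx k).1) (mul_nonneg hb (hy k).1)
  · calc a * x k + b * y k ≤ a * 1 + b * 1 := by gcongr <;> simp [hx k, hy k]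
      _ = 1 := by rw [mul_one, mul_one, hab]
  · simp only [Pi.add_apply, Pi.smul_apply, smul_eq_mul, Finset.sum_add_distrib,
      ← Finset.mul_sum, hxd, hyd, ← add_mul, hab, one_mul]

def exchangePolytope (M : Matroid (Fin n)) (i j : Fin n) : Set (Fin n → ℝ) :=
  convexHull ℝ {x | ∃ B ∈ exchangeFamily M i j, x = indVec B}

theorem exchangePolytope_subset (hij : i ≠ j) (hrank : ∀ B, M.IsBase B → B.ncard = d) :
    exchangePolytope M i j ⊆ (rankPolytope M + ray (eVec n i - eVec n j)) ∩ hypersimplex d n := by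
  refine convexHull_min ?_ (((convex_convexHull ℝ _).add (convex_ray _)).inter convex_hypersimplex)
  rintro _ ⟨B, hB | ⟨B₀, hB₀, hjB₀, hiB₀, rfl⟩, rfl⟩
  · exact ⟨⟨indVec B, subset_convexHull ℝ _ ⟨B, hB, rfl⟩, 0, ⟨0, le_rfl, (zero_smul ℝ _).symm⟩,
      add_zero _⟩, indVec_mem_hypersimplex (hrank B hB)⟩
  · refine ⟨⟨indVec B₀, subset_convexHull ℝ _ ⟨B₀, hB₀, rfl⟩, _,
      ⟨1, zero_le_one, (one_smul ℝ _).symm⟩, (indVec_sdiff_union_singleton hij hjB₀ hiB₀).symm⟩,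
      indVec_mem_hypersimplex ?_⟩
    rw [union_singleton, ncard_insert_of_notMem fun h ↦ hiB₀ h.1,
      ncard_sdiff_singleton_add_one hjB₀, hrank B₀ hB₀]

end RankPolytope

section ExchangeWeights

open scoped Classical

variable {n d : ℕ} {M : Matroid (Fin n)} {i j : Fin n}

def exchangeIndicator (i j : Fin n) (B : Set (Fin n)) : ℝ := if j ∈ B ∧ i ∉ B then 1 else 0

theorem rankPolytope_eq_convexHull_range :
    rankPolytope M = convexHull ℝ (range fun B : {B // M.IsBase B} ↦ indVec B.1) := by
  unfold rankPolytope
  congr 1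
  ext x
  simp [eq_comm]

theorem indVec_add_exchangeIndicator_smul_mem (hij : i ≠ j) {B : Set (Fin n)} (hB : M.IsBase B) :
    indVec B + exchangeIndicator i j B • (eVec n i - eVec n j) ∈
      {x | ∃ B ∈ exchangeFamily M i j, x = indVec B} := by
  unfold exchangeIndicator
  split_ifs with h
  · refine ⟨_, Or.inr ⟨B, hB, h.1, h.2, rfl⟩, ?_⟩
    rw [indVec_sdiff_union_singleton hij h.1 h.2, one_smul]
  · exact ⟨B, Or.inl hB, by rw [zero_smul, add_zero]⟩

theorem sum_smul_indVec_add_smul_mem_exchangePolytope (hij : i ≠ j)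
    {w : {B // M.IsBase B} → ℝ} (hw : w ∈ stdSimplex ℝ _) {t : ℝ} (ht₀ : 0 ≤ t)
    (ht : t ≤ ∑ B, w B * exchangeIndicator i j B.1) :
    ∑ B, w B • indVec B.1 + t • (eVec n i - eVec n j) ∈ exchangePolytope M i j := by
  refine (convex_convexHull ℝ _).add_smul_mem_of_le ?_ ?_ ht₀ ht
  · exact mem_convexHull_of_exists_fintype w (fun B ↦ indVec B.1) hw.1 hw.2
      (fun B ↦ ⟨B.1, Or.inl B.2, rfl⟩) rfl
  · refine mem_convexHull_of_exists_fintype w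
      (fun B ↦ indVec B.1 + exchangeIndicator i j B.1 • (eVec n i - eVec n j)) hw.1 hw.2
      (fun B ↦ indVec_add_exchangeIndicator_smul_mem hij B.2) ?_
    simp only [smul_add, Finset.sum_add_distrib, smul_smul, ← Finset.sum_smul]

theorem min_le_sum_mul_exchangeIndicator_of_isMax (hij : i ≠ j)
    {w : {B // M.IsBase B} → ℝ} (hw : w ∈ stdSimplex ℝ _)
    (hmax : ∀ w' ∈ stdSimplex ℝ {B // M.IsBase B},
      ∑ B, w' B • indVec B.1 = ∑ B, w B • indVec B.1 →
        ∑ B, w' B * exchangeIndicator i j B.1 ≤ ∑ B, w B * exchangeIndicator i j B.1) :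
    min ((∑ B, w B • indVec B.1) j) (1 - (∑ B, w B • indVec B.1) i) ≤
      ∑ B, w B * exchangeIndicator i j B.1 := by
  set α := ∑ B, w B * exchangeIndicator i j B.1
  have hcoord : ∀ k, (∑ B, w B • indVec B.1) k = ∑ B, w B * indVec B.1 k := fun k ↦ by
    simp only [Finset.sum_apply, Pi.smul_apply, smul_eq_mul]
  by_contra! h
  rw [lt_min_iff, hcoord, hcoord, ← hw.2, ← Finset.sum_sub_distrib] at h
  simp only [← mul_one_sub] at h
  obtain ⟨B₁, hwB₁, hB₁⟩ := exists_pos_lt_of_sum_mul_lt hw.1 h.1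
  obtain ⟨B₂, hwB₂, hB₂⟩ := exists_pos_lt_of_sum_mul_lt hw.1 h.2
  have hijB₁ : j ∈ B₁.1 ∧ i ∈ B₁.1 := by
    by_contra! hB
    by_cases hj : j ∈ B₁.1 <;> simp_all [exchangeIndicator]
  have hijB₂ : i ∉ B₂.1 ∧ j ∉ B₂.1 := by
    by_contra! hB
    by_cases hi : i ∈ B₂.1 <;> simp_all [exchangeIndicator]
  obtain ⟨f, ⟨hfB₂, hfB₁⟩, hC₁, hC₂⟩ := B₁.2.exists_symm_exchange B₂.2 ⟨hijB₁.1, hijB₂.2⟩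
  have hfj : f ≠ j := fun h ↦ hijB₂.2 (h ▸ hfB₂)
  set m := min (w B₁) (w B₂)
  set w' := w + m • transferWeight B₁ B₂ ⟨_, hC₁⟩ ⟨_, hC₂⟩
  have hB₁₂ : B₁ ≠ B₂ := fun h ↦ hijB₂.1 (h ▸ hijB₁.2)
  have hw' : w' ∈ stdSimplex ℝ _ :=
    add_smul_transferWeight_mem_stdSimplex hw hB₁₂ _ _ (le_min hwB₁.le hwB₂.le)
      (min_le_left _ _) (min_le_right _ _)
  have hw'p : ∑ B, w' B • indVec B.1 = ∑ B, w B • indVec B.1 := by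
    rw [sum_add_smul_transferWeight_smul, indVec_insert_sdiff_add_indVec_insert_sdiff
      hijB₁.1 hijB₂.2 hfB₂ hfB₁, sub_sub, sub_self, smul_zero, add_zero]
  have hw'α : ∑ B, w' B * exchangeIndicator i j B.1 = α + m := by
    have := sum_add_smul_transferWeight_smul w m B₁ B₂ ⟨_, hC₁⟩ ⟨_, hC₂⟩
      (fun B ↦ exchangeIndicator i j B.1)
    simp only [smul_eq_mul] at this
    rw [this]
    congr 1
    simp [exchangeIndicator, hijB₁, hijB₂, hfj.symm, hij]
  linarith [hmax w' hw' hw'p, lt_min hwB₁ hwB₂]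

theorem mem_exchangePolytope_of_le (hij : i ≠ j) {p : Fin n → ℝ} (hp : p ∈ rankPolytope M)
    {t : ℝ} (ht₀ : 0 ≤ t) (htj : t ≤ p j) (hti : t ≤ 1 - p i) :
    p + t • (eVec n i - eVec n j) ∈ exchangePolytope M i j := by
  rw [rankPolytope_eq_convexHull_range] at hp
  obtain ⟨w, hw, rfl, hmax⟩ :=
    exists_max_sum_mul_of_mem_convexHull hp fun B ↦ exchangeIndicator i j B.1
  exact sum_smul_indVec_add_smul_mem_exchangePolytope hij hw ht₀
    ((le_min htj hti).trans (min_le_sum_mul_exchangeIndicator_of_isMax hij hw hmax))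

theorem inter_hypersimplex_subset_exchangePolytope (hij : i ≠ j) :
    (rankPolytope M + ray (eVec n i - eVec n j)) ∩ hypersimplex d n ⊆ exchangePolytope M i j := by
  rintro _ ⟨⟨p, hp, _, ⟨t, ht₀, rfl⟩, rfl⟩, hx, -⟩
  have hxj := (hx j).1
  have hxi := (hx i).2
  simp [eVec, hij, hij.symm] at hxj hxi
  exact mem_exchangePolytope_of_le hij hp ht₀ (by linarith) (by linarith)

end ExchangeWeights

/-- The exchange family is the set of bases of a matroid `M′`, and the convex hull of its
indicator vectors equals `(P_M + ℝ_{≥0}(eᵢ − eⱼ)) ∩ Δ_{d,n}`. -/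
theorem exchangeFamily_matroid_and_polytope {n d : ℕ} (M : Matroid (Fin n))
    (hE : M.E = Set.univ) (hrank : ∀ B, M.IsBase B → B.ncard = d)
    (i j : Fin n) (hij : i ≠ j) :
    (∃ M' : Matroid (Fin n), M'.E = Set.univ ∧
      ∀ B : Set (Fin n), M'.IsBase B ↔ B ∈ exchangeFamily M i j) ∧
    convexHull ℝ {x | ∃ B ∈ exchangeFamily M i j, x = indVec B} =
      (rankPolytope M + ray (eVec n i - eVec n j)) ∩ hypersimplex d n :=
  ⟨⟨M.exchangeMatroid hij (hE ▸ mem_univ i), hE, fun _ ↦ Matroid.exchangeMatroid_isBase_iff⟩,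
    (exchangePolytope_subset hij hrank).antisymm (inter_hypersimplex_subset_exchangePolytope hij)⟩
end
end
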